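/- For every finite subset A of ℤⁿ, with Ā = A + [0,1]ⁿ ⊆ ℝⁿ and Q = [0,1]ⁿ, and for every x ∈ ℝⁿ, one has g_{Ā}(x) = Σ_{z ∈ ℤⁿ} |A ∩ (A + z)| · g_Q(z + x) (the sum has only finitely many nonzero terms). -/

import Mathlib

/-!
`Ā` is the union of the lattice cubes `a + Q`, `a ∈ A`, which pairwise meet in null sets. Hence
`Ā ∩ (Ā + x)` is, up to null sets, the disjoint union over `(a, b) ∈ A × A` of
`(a + Q) ∩ (b + x + Q)`, a translate of `Q ∩ (Q + (b - a + x))`, whose volume is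
`g_Q(b - a + x)`. Grouping the pairs by `z = b - a`, the pairs with a given difference `z`
correspond to the points `b ∈ A ∩ (A + z)`.
-/

open MeasureTheory Topology Filter Set Pointwise

/-- The covariogram of a set `A ⊆ ℝⁿ`: `g_A(x) = λₙ(A ∩ (A + x))`. -/
noncomputable def covariogram {n : ℕ} (A : Set (EuclideanSpace ℝ (Fin n)))
    (x : EuclideanSpace ℝ (Fin n)) : ℝ :=
  (volume (A ∩ ((· + x) '' A))).toReal

/-- The embedding of the integer lattice `ℤⁿ` into `ℝⁿ`. -/
def latticeEmbed {n : ℕ} (z : Fin n → ℤ) : EuclideanSpace ℝ (Fin n) :=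
  WithLp.toLp 2 (fun i => (z i : ℝ))

/-- The unit cube `[0,1]ⁿ ⊆ ℝⁿ`. -/
def unitCube (n : ℕ) : Set (EuclideanSpace ℝ (Fin n)) :=
  {x | ∀ i, x i ∈ Set.Icc (0 : ℝ) 1}

lemma Set.image_add_right_eq_vadd {G : Type*} [AddCommGroup G] (S : Set G) (x : G) :
    (· + x) '' S = x +ᵥ S := by
  simp_rw [add_comm _ x]
  exact Set.image_vadd (a := x) (t := S)

lemma Set.image_add_eq_biUnion_vadd {G ι : Type*} [AddGroup G] (f : ι → G) (s : Set ι)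
    (S : Set G) : f '' s + S = ⋃ i ∈ s, f i +ᵥ S := by
  rw [← Set.biUnion_image (g := (· +ᵥ S)), Set.iUnion_vadd_set]
  rfl

namespace Finset

open scoped Finset

variable {G : Type*} [AddCommGroup G] [DecidableEq G]

lemma card_filter_sub_eq_card_inter_image_add (A : Finset G) (z : G) :
    #{p ∈ A ×ˢ A | p.2 - p.1 = z} = #(A ∩ A.image (· + z)) := by
  refine card_nbij' Prod.snd (fun c => (c - z, c)) ?_ ?_ ?_ ?_
  · rintro ⟨a, b⟩ hp
    simp only [mem_coe, mem_filter, mem_product] at hp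
    obtain ⟨⟨ha, hb⟩, rfl⟩ := hp
    simpa using ⟨hb, by simpa using ha⟩
  · intro c hc
    simpa [sub_eq_add_neg, and_comm] using hc
  · rintro ⟨a, b⟩ hp
    simp only [mem_coe, mem_filter, mem_product] at hp
    obtain ⟨-, rfl⟩ := hp
    simp
  · intro c _
    simp

lemma sum_product_sub_eq_finsum_card_smul {M : Type*} [AddCommMonoid M] (A : Finset G)
    (f : G → M) :
    ∑ p ∈ A ×ˢ A, f (p.2 - p.1) = ∑ᶠ z, #(A ∩ A.image (· + z)) • f z := by
  rw [sum_comp, finsum_eq_sum_of_support_subset (s := (A ×ˢ A).image fun p => p.2 - p.1)]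
  · simp_rw [card_filter_sub_eq_card_inter_image_add]
  · intro z hz
    rw [Function.mem_support, ← card_filter_sub_eq_card_inter_image_add] at hz
    obtain ⟨p, hp⟩ := card_ne_zero.mp (left_ne_zero_of_smul hz)
    exact mem_coe.mpr (mem_image.mpr ⟨p, mem_filter.mp hp⟩)

end Finset

section Translates

variable {G ι : Type*} [AddCommGroup G] [MeasurableSpace G] {μ : Measure G}
  [μ.IsAddLeftInvariant]

lemma measure_vadd_inter_vadd (a b : G) (S : Set G) :
    μ ((a +ᵥ S) ∩ (b +ᵥ S)) = μ (S ∩ ((b - a) +ᵥ S)) := by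
  rw [← measure_vadd μ a (S ∩ _), Set.vadd_set_inter, vadd_vadd, add_sub_cancel]

lemma aedisjoint_vadd_iff (x : G) {S T : Set G} :
    AEDisjoint μ (x +ᵥ S) (x +ᵥ T) ↔ AEDisjoint μ S T := by
  rw [AEDisjoint, AEDisjoint, ← Set.vadd_set_inter, measure_vadd]

lemma measure_biUnion_vadd_inter_vadd [MeasurableAdd G] {S : Set G}
    (hS : NullMeasurableSet S μ) {s : Finset ι} {v : ι → G}
    (hs : (s : Set ι).Pairwise fun i j => AEDisjoint μ (v i +ᵥ S) (v j +ᵥ S)) (x : G) :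
    μ ((⋃ i ∈ s, v i +ᵥ S) ∩ (x +ᵥ ⋃ i ∈ s, v i +ᵥ S)) =
      ∑ p ∈ s ×ˢ s, μ (S ∩ ((x + v p.2 - v p.1) +ᵥ S)) := by
  have hunion : (⋃ i ∈ s, v i +ᵥ S) ∩ (x +ᵥ ⋃ i ∈ s, v i +ᵥ S) =
      ⋃ p ∈ s ×ˢ s, (v p.1 +ᵥ S) ∩ ((x + v p.2) +ᵥ S) := by
    simp_rw [Set.vadd_set_iUnion₂, vadd_vadd, Set.iUnion₂_inter_iUnion₂]
    ext y
    simp only [Set.mem_iUnion, Finset.mem_product, exists_prop, Prod.exists]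
    tauto
  have hpieces : (↑(s ×ˢ s) : Set (ι × ι)).Pairwise fun p q =>
      AEDisjoint μ ((v p.1 +ᵥ S) ∩ ((x + v p.2) +ᵥ S)) ((v q.1 +ᵥ S) ∩ ((x + v q.2) +ᵥ S)) := by
    rintro ⟨i, j⟩ hij ⟨k, l⟩ hkl hne
    simp only [Finset.coe_product, Set.mem_prod, Finset.mem_coe] at hij hkl
    by_cases hik : i = k
    · have hjl : j ≠ l := fun h => hne (by rw [hik, h])
      refine AEDisjoint.mono ?_ Set.inter_subset_right Set.inter_subset_right
      rw [← vadd_vadd, ← vadd_vadd, aedisjoint_vadd_iff]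
      exact hs hij.2 hkl.2 hjl
    · exact (hs hij.1 hkl.1 hik).mono Set.inter_subset_left Set.inter_subset_left
  rw [hunion, measure_biUnion_finset₀ hpieces fun p _ => (hS.vadd _).inter (hS.vadd _)]
  exact Finset.sum_congr rfl fun p _ => measure_vadd_inter_vadd _ _ _

end Translates

lemma EuclideanSpace.volume_setOf_apply_eq {ι : Type*} [Fintype ι] (i : ι) (c : ℝ) :
    volume {y : EuclideanSpace ℝ ι | y i = c} = 0 :=
  (PiLp.volume_preserving_ofLp ι).quasiMeasurePreserving.preimage_null
    (Measure.pi_hyperplane (fun _ : ι => (volume : Measure ℝ)) i c)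

section LatticeCubes

variable {n : ℕ}

lemma latticeEmbed_sub (a b : Fin n → ℤ) :
    latticeEmbed (a - b) = latticeEmbed a - latticeEmbed b := by
  ext i
  simp [latticeEmbed]

lemma unitCube_eq_preimage : unitCube n = WithLp.ofLp ⁻¹' Icc 0 1 := by
  ext y
  simp [unitCube, Pi.le_def, forall_and]

lemma measurableSet_unitCube : MeasurableSet (unitCube n) := by
  rw [unitCube_eq_preimage]
  exact measurableSet_Icc.preimage (PiLp.volume_preserving_ofLp _).measurable

lemma volume_unitCube : volume (unitCube n) = 1 := by
  rw [unitCube_eq_preimage, (PiLp.volume_preserving_ofLp _).measure_preimage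
    measurableSet_Icc.nullMeasurableSet, Real.volume_Icc_pi]
  simp

lemma mem_vadd_unitCube {v y : EuclideanSpace ℝ (Fin n)} :
    y ∈ v +ᵥ unitCube n ↔ ∀ i, y i - v i ∈ Icc 0 1 := by
  rw [Set.mem_vadd_set_iff_neg_vadd_mem]
  simp [unitCube, sub_eq_neg_add]

lemma aedisjoint_latticeEmbed_vadd_unitCube {a b : Fin n → ℤ} (hab : a ≠ b) :
    AEDisjoint volume (latticeEmbed a +ᵥ unitCube n) (latticeEmbed b +ᵥ unitCube n) := by
  obtain ⟨i, hi⟩ := Function.ne_iff.mp hab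
  wlog hlt : a i < b i generalizing a b
  · exact (this hab.symm hi.symm (hi.lt_or_gt.resolve_left hlt)).symm
  -- the two cubes can only meet on the face `y i = b i`
  refine measure_mono_null ?_ (EuclideanSpace.volume_setOf_apply_eq i (b i : ℝ))
  rintro y ⟨hya, hyb⟩
  have hya_le := (mem_vadd_unitCube.mp hya i).2
  have hyb_ge := (mem_vadd_unitCube.mp hyb i).1
  have hab_succ : (a i : ℝ) + 1 ≤ b i := by exact_mod_cast hlt
  simp only [latticeEmbed] at hya_le hyb_ge
  exact le_antisymm (by linarith) (by linarith)

end LatticeCubes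

/-- For a finite `A ⊆ ℤⁿ`, with `Ā = A + [0,1]ⁿ` and `Q = [0,1]ⁿ`, one has
`g_Ā(x) = Σ_{z ∈ ℤⁿ} |A ∩ (A + z)| g_Q(z + x)` for every `x ∈ ℝⁿ`. -/
theorem covariogram_animal_sum {n : ℕ} (A : Finset (Fin n → ℤ))
    (x : EuclideanSpace ℝ (Fin n)) :
    covariogram (latticeEmbed '' ↑A + unitCube n) x =
      ∑ᶠ z : Fin n → ℤ,
        ((A ∩ A.image (· + z)).card : ℝ) * covariogram (unitCube n) (latticeEmbed z + x) := by
  have hdisj : (A : Set (Fin n → ℤ)).Pairwise fun a b =>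
      AEDisjoint volume (latticeEmbed a +ᵥ unitCube n) (latticeEmbed b +ᵥ unitCube n) :=
    fun a _ b _ hab => aedisjoint_latticeEmbed_vadd_unitCube hab
  have hfin (v : EuclideanSpace ℝ (Fin n)) : volume (unitCube n ∩ (v +ᵥ unitCube n)) ≠ ⊤ :=
    measure_ne_top_of_subset inter_subset_left (by simp [volume_unitCube])
  simp_rw [← nsmul_eq_mul]
  rw [← Finset.sum_product_sub_eq_finsum_card_smul, covariogram, Set.image_add_right_eq_vadd,
    Set.image_add_eq_biUnion_vadd, Finset.set_biUnion_coe,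
    measure_biUnion_vadd_inter_vadd measurableSet_unitCube.nullMeasurableSet hdisj,
    ENNReal.toReal_sum fun p _ => hfin _]
  refine Finset.sum_congr rfl fun p _ => ?_
  rw [covariogram, Set.image_add_right_eq_vadd, latticeEmbed_sub, add_sub_assoc, add_comm x]
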